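/- Let ℓ ≥ 1, q = 2^ℓ, and let r be an integer with 1 ≤ r ≤ q − 1. Then for t = 1 and for t = 2, S_t(ℓ; r) ⊆ S_{t−1}(ℓ; r); i.e., if (a, b) ∈ S_t(ℓ; r) then (a, b) ∈ S_{t−1}(ℓ; r). -/
import Mathlib


/-- `u ≤₂ v`: every binary digit of `u` is at most the corresponding binary digit
of `v` (the 2-shadow relation). -/
def le2 (u v : ℕ) : Prop := ∀ k, u.testBit k = true → v.testBit k = true

/-- The set `S_t(ℓ; r)` of pairs `(a, b)` with `0 ≤ a, b ≤ 2^ℓ − 1` for which there exist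
`i ≤₂ b`, `j ≤₂ (b − i)` and `1 ≤ r' ≤ r` with `2i + j + a = (t+1)·2^ℓ − r'`. -/
def Sset (ℓ r t : ℕ) : Set (ℕ × ℕ) :=
  {p | p.1 ≤ 2 ^ ℓ - 1 ∧ p.2 ≤ 2 ^ ℓ - 1 ∧
    ∃ i j r' : ℕ, le2 i p.2 ∧ le2 j (p.2 - i) ∧ 1 ≤ r' ∧ r' ≤ r ∧
      2 * i + j + p.1 = (t + 1) * 2 ^ ℓ - r'}

lemma le2_le {u v : ℕ} (h : le2 u v) : u ≤ v := by
  have : u &&& v = u := by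
    apply Nat.eq_of_testBit_eq
    intro k
    rw [Nat.testBit_and]
    cases hu : u.testBit k
    · simp
    · simp [h k hu]
  calc u = u &&& v := this.symm
    _ ≤ v := Nat.and_le_right

lemma testBit_false_of_lt {x n k : ℕ} (h : x < 2 ^ n) (hk : n ≤ k) : x.testBit k = false :=
  Nat.testBit_lt_two_pow (lt_of_lt_of_le h (Nat.pow_le_pow_right (by norm_num) hk))

lemma ge_of_testBit {x k : ℕ} (h : x.testBit k = true) : 2 ^ k ≤ x := by
  by_contra hc
  rw [Nat.testBit_lt_two_pow (by omega)] at h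
  exact Bool.false_ne_true h

lemma div_pow_eq_one {x n : ℕ} (h1 : 2 ^ n ≤ x) (h2 : x < 2 ^ (n+1)) : x / 2 ^ n = 1 := by
  apply Nat.div_eq_of_lt_le <;>
    [simpa using h1; simpa [Nat.pow_succ, two_mul, Nat.mul_comm] using h2]

lemma lt_of_testBit_false {x n : ℕ} (h1 : x < 2 ^ (n+1)) (h2 : x.testBit n = false) :
    x < 2 ^ n := by
  by_contra hc
  push_neg at hc
  rw [Nat.testBit_eq_decide_div_mod_eq, div_pow_eq_one hc h1] at h2
  simp at h2

lemma mod_eq_sub {x n : ℕ} (h1 : x < 2 ^ (n+1)) (h2 : x.testBit n = true) :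
    x % 2 ^ n = x - 2 ^ n := by
  have hge := ge_of_testBit h2
  have hd := div_pow_eq_one hge h1
  have h3 := Nat.div_add_mod x (2 ^ n)
  rw [hd, mul_one] at h3
  omega

lemma testBit_true_of_ge {x n : ℕ} (h1 : 2 ^ n ≤ x) (h2 : x < 2 ^ (n+1)) :
    x.testBit n = true := by
  rw [Nat.testBit_eq_decide_div_mod_eq, div_pow_eq_one h1 h2]
  simp

-- bits of x - 2^n for x < 2^(n+1) with top bit set: same bits below n, false at ≥ n
lemma testBit_sub_pow {x n k : ℕ} (h1 : x < 2 ^ (n+1)) (h2 : x.testBit n = true) :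
    (x - 2 ^ n).testBit k = (decide (k < n) && x.testBit k) := by
  rw [← mod_eq_sub h1 h2, Nat.testBit_mod_two_pow]

-- bits of w + 2^n for w < 2^n
lemma testBit_add_pow {w n k : ℕ} (h : w < 2 ^ n) :
    (w + 2 ^ n).testBit k = if k = n then true else w.testBit k := by
  have hx1 : w + 2 ^ n < 2 ^ (n+1) := by
    have : 2 ^ (n+1) = 2 ^ n * 2 := Nat.pow_succ 2 n
    omega
  have hx2 : (w + 2 ^ n).testBit n = true := testBit_true_of_ge (by omega) hx1
  rcases lt_trichotomy k n with hk | hk | hk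
  · rw [if_neg (by omega)]
    have := testBit_sub_pow hx1 hx2 (k := k)
    simpa [hk, Nat.add_sub_cancel] using this.symm
  · subst hk; rw [if_pos rfl]; exact hx2
  · rw [if_neg (by omega), testBit_false_of_lt hx1 (by omega),
      testBit_false_of_lt h (by omega)]

/-- Key lemma: a value `2i+j ≥ 2^ℓ` representable with digits supported on bits of
`b < 2^ℓ` can be decreased by `2^ℓ` staying representable. -/
lemma key : ∀ ℓ b i j : ℕ, b < 2 ^ ℓ → le2 i b → le2 j (b - i) → 2 ^ ℓ ≤ 2 * i + j →
    ∃ i' j', le2 i' b ∧ le2 j' (b - i') ∧ 2 * i' + j' + 2 ^ ℓ = 2 * i + j := by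
  intro ℓ
  induction ℓ with
  | zero =>
    intro b i j hb hi hj hm
    interval_cases b
    have h1 : i ≤ 0 := le2_le hi
    have h2 : j ≤ 0 - i := le2_le hj
    omega
  | succ n IH =>
    intro b i j hb hi hj hm
    have hib := le2_le hi
    have hjbi := le2_le hj
    have hpow : 2 ^ (n+1) = 2 ^ n * 2 := Nat.pow_succ 2 n
    cases hitop : i.testBit n with
    | true =>
      -- Case A: subtract 2^n from i
      have hige : 2 ^ n ≤ i := ge_of_testBit hitop
      have hile : i < 2 ^ (n+1) := lt_of_le_of_lt hib hb
      have hbi_lt : b - i < 2 ^ n := by omega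
      refine ⟨i - 2 ^ n, j, ?_, ?_, by omega⟩
      · intro k hk
        rw [testBit_sub_pow hile hitop] at hk
        exact hi k (by simpa using (Bool.and_eq_true _ _ |>.mp hk).2)
      · have : b - (i - 2 ^ n) = (b - i) + 2 ^ n := by omega
        rw [this]
        intro k hk
        rw [testBit_add_pow hbi_lt]
        rcases eq_or_ne k n with rfl | hkn
        · simp
        · rw [if_neg hkn]; exact hj k hk
    | false =>
      have hile : i < 2 ^ (n+1) := lt_of_le_of_lt hib hb
      have hilt : i < 2 ^ n := lt_of_testBit_false hile hitop
      cases hjtop : j.testBit n with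
      | true =>
        -- Case B: recurse after stripping top bit of j (and b)
        have hjge : 2 ^ n ≤ j := ge_of_testBit hjtop
        have hbitop : (b - i).testBit n = true := hj n hjtop
        have hbige : 2 ^ n ≤ b - i := ge_of_testBit hbitop
        have hbtop : b.testBit n = true := testBit_true_of_ge (by omega) hb
        have hjle : j < 2 ^ (n+1) := by omega
        have hbilt : b - i < 2 ^ (n+1) := by omega
        set b₁ := b - 2 ^ n with hb₁
        have hb₁lt : b₁ < 2 ^ n := by omega
        have hib₁ : le2 i b₁ := by
          intro k hk
          rw [hb₁, ← mod_eq_sub hb hbtop, Nat.testBit_mod_two_pow]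
          have hkn : k < n := by
            by_contra hc
            rw [testBit_false_of_lt hilt (by omega)] at hk
            exact Bool.false_ne_true hk
          simp [hkn, hi k hk]
        have hsub : b₁ - i = (b - i) - 2 ^ n := by omega
        have hjb₁ : le2 (j - 2 ^ n) (b₁ - i) := by
          intro k hk
          rw [testBit_sub_pow hjle hjtop] at hk
          obtain ⟨hkn, hjk⟩ := Bool.and_eq_true _ _ |>.mp hk
          rw [hsub, testBit_sub_pow hbilt hbitop]
          simp only [hkn, Bool.true_and]
          exact hj k hjk
        obtain ⟨i', j', hi', hj', heq⟩ := IH b₁ i (j - 2 ^ n) hb₁lt hib₁ hjb₁ (by omega)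
        have hi'lt : i' < 2 ^ n := lt_of_le_of_lt (le2_le hi') hb₁lt
        have hb₁i' : b₁ - i' < 2 ^ n := by omega
        refine ⟨i', j', ?_, ?_, by omega⟩
        · intro k hk
          have hkn : k < n := by
            by_contra hc
            rw [testBit_false_of_lt hi'lt (by omega)] at hk
            exact Bool.false_ne_true hk
          have := hi' k hk
          rw [hb₁, ← mod_eq_sub hb hbtop, Nat.testBit_mod_two_pow] at this
          exact (Bool.and_eq_true _ _ |>.mp this).2
        · have : b - i' = (b₁ - i') + 2 ^ n := by omega
          rw [this]
          intro k hk
          have := hj' k hk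
          rw [testBit_add_pow hb₁i']
          have hkn : k < n := by
            by_contra hc
            have : j' ≤ b₁ - i' := le2_le hj'
            rw [testBit_false_of_lt (show j' < 2 ^ n by omega) (by omega)] at hk
            exact Bool.false_ne_true hk
          rw [if_neg (by omega)]
          exact this
      | false =>
        -- Case C: contradiction
        exfalso
        cases hbtop : b.testBit n with
        | false =>
          have hblt : b < 2 ^ n := lt_of_testBit_false hb hbtop
          omega
        | true =>
          have hbge : 2 ^ n ≤ b := ge_of_testBit hbtop
          -- i is supported on the low part of b, so i ≤ b - 2^n
          have hib₁ : le2 i (b - 2 ^ n) := by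
            intro k hk
            rw [← mod_eq_sub hb hbtop, Nat.testBit_mod_two_pow]
            have hkn : k < n := by
              by_contra hc
              rw [testBit_false_of_lt hilt (by omega)] at hk
              exact Bool.false_ne_true hk
            simp [hkn, hi k hk]
          have hib₁' : i ≤ b - 2 ^ n := le2_le hib₁
          have hbitop : (b - i).testBit n = true :=
            testBit_true_of_ge (by omega) (by omega)
          have hjlt : j < 2 ^ n := by
            apply lt_of_testBit_false _ hjtop
            omega
          have hjle2 : le2 j ((b - i) - 2 ^ n) := by
            intro k hk
            have hkn : k < n := by
              by_contra hc
              rw [testBit_false_of_lt hjlt (by omega)] at hk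
              exact Bool.false_ne_true hk
            rw [testBit_sub_pow (by omega) hbitop]
            simp [hkn, hj k hk]
          have := le2_le hjle2
          have hbge : 2 ^ n ≤ b := ge_of_testBit hbtop
          omega

/-- For `t = 1` and `t = 2`, `S_t(ℓ; r) ⊆ S_{t−1}(ℓ; r)`. -/
theorem stmt_12 (ℓ r : ℕ) (hℓ : 1 ≤ ℓ) (hr1 : 1 ≤ r) (hr2 : r ≤ 2 ^ ℓ - 1) :
    Sset ℓ r 1 ⊆ Sset ℓ r 0 ∧ Sset ℓ r 2 ⊆ Sset ℓ r 1 := by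
  have hq : 2 ≤ 2 ^ ℓ := by
    calc 2 = 2 ^ 1 := rfl
    _ ≤ 2 ^ ℓ := Nat.pow_le_pow_right (by norm_num) hℓ
  constructor
  · rintro ⟨a, b⟩ ⟨ha, hb, i, j, r', hi, hj, hr'1, hr'r, heq⟩
    refine ⟨ha, hb, ?_⟩
    simp only at heq ha hb ⊢
    by_cases hcase : 2 ^ ℓ ≤ 2 * i + j
    · obtain ⟨i', j', hi', hj', heq'⟩ := key ℓ b i j (by omega) hi hj hcase
      exact ⟨i', j', r', hi', hj', hr'1, hr'r, by omega⟩
    · refine ⟨0, 0, 2 ^ ℓ - a, ?_, ?_, by omega, by omega, by omega⟩ <;>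
        (intro k hk; rw [Nat.zero_testBit] at hk; exact absurd hk (by simp))
  · rintro ⟨a, b⟩ ⟨ha, hb, i, j, r', hi, hj, hr'1, hr'r, heq⟩
    refine ⟨ha, hb, ?_⟩
    simp only at heq ha hb ⊢
    have hcase : 2 ^ ℓ ≤ 2 * i + j := by omega
    obtain ⟨i', j', hi', hj', heq'⟩ := key ℓ b i j (by omega) hi hj hcase
    exact ⟨i', j', r', hi', hj', hr'1, hr'r, by omega⟩
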